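/- arXiv:2009.03183 — 3 statements merged into one kernel-verified Lean document; each statement's English description precedes it below -/
import Mathlib

section
/- For any measurable function f with f(X) of positive finite variance, ρ(f(X), Y) ≤ σ_{E(Y|X)} / σ_Y = ρ(E(Y|X), Y), where σ denotes standard deviation. Consequently E(Y|X) (up to positive affine transformation) maximizes the Pearson correlation with Y over all measurable transformations of X. -/
open MeasureTheory ProbabilityTheory

/-- Covariance of two real random variables: `Cov(U,V) = E(UV) - E(U)E(V)`. -/
noncomputable def cov {Ω : Type*} [MeasurableSpace Ω] (μ : Measure Ω) (U V : Ω → ℝ) : ℝ :=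
  (∫ ω, U ω * V ω ∂μ) - (∫ ω, U ω ∂μ) * (∫ ω, V ω ∂μ)

/-- Pearson correlation coefficient `ρ(U,V) = Cov(U,V)/(σ_U σ_V)`. -/
noncomputable def pearson {Ω : Type*} [MeasurableSpace Ω] (μ : Measure Ω) (U V : Ω → ℝ) : ℝ :=
  cov μ U V / (Real.sqrt (variance U μ) * Real.sqrt (variance V μ))

/-!
Since `f(X)` is `σ(X)`-measurable, the pull-out property gives `E[f(X) Y] = E[f(X) E(Y|X)]`, so
`Cov(f(X), Y) = Cov(f(X), E(Y|X))`, and Cauchy–Schwarz bounds the latter by `σ_{f(X)} σ_{E(Y|X)}`.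
Taking `f(X) = E(Y|X)` itself gives `Cov(E(Y|X), Y) = Var(E(Y|X))`, i.e. the equality case.
-/

section

variable {Ω : Type*} {m mΩ : MeasurableSpace Ω} {μ : Measure Ω} {U V Y g : Ω → ℝ}

/-- `t ↦ Var[t • U + V]` is a nonnegative quadratic, so its discriminant is nonpositive. -/
lemma sq_covariance_le_variance_mul [IsFiniteMeasure μ] (hU : MemLp U 2 μ) (hV : MemLp V 2 μ) :
    cov[U, V; μ] ^ 2 ≤ Var[U; μ] * Var[V; μ] := by
  have hquad : ∀ t : ℝ, 0 ≤ Var[U; μ] * (t * t) + 2 * cov[U, V; μ] * t + Var[V; μ] := by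
    intro t
    have h := variance_nonneg (t • U + V) μ
    rw [variance_add (hU.const_smul t) hV, variance_smul, covariance_smul_left] at h
    linarith
  have := discrim_le_zero hquad
  rw [discrim] at this
  linarith

lemma covariance_le_sqrt_variance_mul_sqrt_variance [IsFiniteMeasure μ] (hU : MemLp U 2 μ)
    (hV : MemLp V 2 μ) : cov[U, V; μ] ≤ √(Var[U; μ]) * √(Var[V; μ]) := by
  rw [← Real.sqrt_mul (variance_nonneg U μ)]
  exact (le_abs_self _).trans (Real.abs_le_sqrt (sq_covariance_le_variance_mul hU hV))

lemma integral_mul_condExp_of_stronglyMeasurable [IsFiniteMeasure μ] (hm : m ≤ mΩ)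
    (hg : StronglyMeasurable[m] g) (hg2 : MemLp g 2 μ) (hY : MemLp Y 2 μ) :
    ∫ ω, g ω * μ[Y | m] ω ∂μ = ∫ ω, g ω * Y ω ∂μ :=
  calc ∫ ω, g ω * μ[Y | m] ω ∂μ = ∫ ω, μ[g * Y | m] ω ∂μ :=
        integral_congr_ae
          (condExp_mul_of_stronglyMeasurable_left hg (hg2.integrable_mul hY)
            (hY.integrable one_le_two)).symm
    _ = ∫ ω, g ω * Y ω ∂μ := integral_condExp hm

lemma covariance_condExp_right [IsProbabilityMeasure μ] (hm : m ≤ mΩ)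
    (hg : StronglyMeasurable[m] g) (hg2 : MemLp g 2 μ) (hY : MemLp Y 2 μ) :
    cov[g, μ[Y | m]; μ] = cov[g, Y; μ] := by
  rw [covariance_eq_sub hg2 (hY.condExp one_le_two), covariance_eq_sub hg2 hY,
    integral_condExp hm]
  congr 1
  exact integral_mul_condExp_of_stronglyMeasurable hm hg hg2 hY

lemma covariance_condExp_left_self [IsProbabilityMeasure μ] (hm : m ≤ mΩ) (hY : MemLp Y 2 μ) :
    cov[μ[Y | m], Y; μ] = Var[μ[Y | m]; μ] := by
  have hZ : MemLp μ[Y | m] 2 μ := hY.condExp one_le_two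
  rw [← covariance_condExp_right hm stronglyMeasurable_condExp hZ hY,
    covariance_self hZ.aemeasurable]

lemma pearson_eq_covariance_div [IsProbabilityMeasure μ] (hU : MemLp U 2 μ) (hV : MemLp V 2 μ) :
    pearson μ U V = cov[U, V; μ] / (√(Var[U; μ]) * √(Var[V; μ])) := by
  rw [pearson, covariance_eq_sub hU hV]
  rfl

end

theorem pearson_le_condexp_pearson_general {Ω : Type*} [MeasurableSpace Ω] (μ : Measure Ω)
    [IsProbabilityMeasure μ] (X Y : Ω → ℝ) (hX : Measurable X)
    (hY : MemLp Y 2 μ)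
    (hEvar : 0 < variance (μ[Y | MeasurableSpace.comap X inferInstance]) μ)
    (f : ℝ → ℝ) (hf : Measurable f) (hfX : MemLp (fun ω => f (X ω)) 2 μ)
    (hfvar : 0 < variance (fun ω => f (X ω)) μ) :
    pearson μ (fun ω => f (X ω)) Y
        ≤ Real.sqrt (variance (μ[Y | MeasurableSpace.comap X inferInstance]) μ)
            / Real.sqrt (variance Y μ) ∧
      Real.sqrt (variance (μ[Y | MeasurableSpace.comap X inferInstance]) μ)
          / Real.sqrt (variance Y μ)
        = pearson μ (μ[Y | MeasurableSpace.comap X inferInstance]) Y := by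
  have hm : MeasurableSpace.comap X inferInstance ≤ ‹MeasurableSpace Ω› := hX.comap_le
  set Z := μ[Y | MeasurableSpace.comap X inferInstance]
  have hZ : MemLp Z 2 μ := hY.condExp one_le_two
  have hfXm : StronglyMeasurable[MeasurableSpace.comap X inferInstance] (fun ω => f (X ω)) :=
    (hf.comp (comap_measurable X)).stronglyMeasurable
  have hσf : 0 < √(Var[fun ω => f (X ω); μ]) := Real.sqrt_pos.2 hfvar
  have hσZ : 0 < √(Var[Z; μ]) := Real.sqrt_pos.2 hEvar
  constructor
  · calc pearson μ (fun ω => f (X ω)) Y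
        = cov[fun ω => f (X ω), Z; μ] / (√(Var[fun ω => f (X ω); μ]) * √(Var[Y; μ])) := by
          rw [pearson_eq_covariance_div hfX hY, covariance_condExp_right hm hfXm hfX hY]
      _ ≤ √(Var[fun ω => f (X ω); μ]) * √(Var[Z; μ])
            / (√(Var[fun ω => f (X ω); μ]) * √(Var[Y; μ])) :=
          div_le_div_of_nonneg_right (covariance_le_sqrt_variance_mul_sqrt_variance hfX hZ)
            (by positivity)
      _ = √(Var[Z; μ]) / √(Var[Y; μ]) := mul_div_mul_left _ _ hσf.ne'
  · rw [pearson_eq_covariance_div hZ hY, covariance_condExp_left_self hm hY,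
      ← mul_div_mul_left (√(Var[Z; μ])) _ hσZ.ne', Real.mul_self_sqrt (variance_nonneg Z μ)]

/-- `ρ(f(X), Y) ≤ σ_{E(Y|X)}/σ_Y = ρ(E(Y|X), Y)` for every measurable `f` with `f(X)` of
positive finite variance. -/
theorem pearson_le_condexp_pearson {Ω : Type*} [MeasurableSpace Ω] (μ : Measure Ω)
    [IsProbabilityMeasure μ] (X Y : Ω → ℝ) (hX : Measurable X) (hYm : Measurable Y)
    (hY : MemLp Y 2 μ) (hYvar : 0 < variance Y μ)
    (hEvar : 0 < variance (μ[Y | MeasurableSpace.comap X inferInstance]) μ)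
    (f : ℝ → ℝ) (hf : Measurable f) (hfX : MemLp (fun ω => f (X ω)) 2 μ)
    (hfvar : 0 < variance (fun ω => f (X ω)) μ) :
    pearson μ (fun ω => f (X ω)) Y
        ≤ Real.sqrt (variance (μ[Y | MeasurableSpace.comap X inferInstance]) μ)
            / Real.sqrt (variance Y μ) ∧
      Real.sqrt (variance (μ[Y | MeasurableSpace.comap X inferInstance]) μ)
          / Real.sqrt (variance Y μ)
        = pearson μ (μ[Y | MeasurableSpace.comap X inferInstance]) Y :=
  pearson_le_condexp_pearson_general μ X Y hX hY hEvar f hf hfX hfvar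
end

section
/- Let Y ~ N(μ, σ²), let U be Bernoulli(1/2) independent of Y, and set X = arctan(Y²) + Uπ. Then E(1_{Y>0} | Y²) = P_Y(|Y|)/(P_Y(|Y|) + P_Y(-|Y|)) almost surely, where P_Y is the Gaussian density of Y; equivalently, 2·E(1_{Y>0}|X) - 1 = tanh((μ/σ²)·√(tan X)). -/
/-!
Let `p` be a density of `Y` and `r(y) = p(|y|) / (p(|y|) + p(-|y|))`. For every `g`, the functions
`y ↦ 1_{y>0} g(y²) p(y)` and `y ↦ r(y) g(y²) p(y)` have the same even part `p(|y|) g(y²) / 2`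
(for `y ≠ 0`), so they have the same Lebesgue integral. Since `U` is independent of `Y`, this can
be applied for each fixed value of `U`, so `r(Y)` satisfies the defining identities of
`E(1_{Y>0} | U, Y²)` on every set of the σ-algebra generated by `(U, Y²)`, hence is the conditional
expectation given any smaller σ-algebra for which it is measurable: `σ(Y²)`, and `σ(X)` because
`Y² = tan X` almost surely. For the Gaussian density, `p(|y|)` and `p(-|y|)` differ only by the
factors `exp (± m |y| / σ²)`, which turns `2 r - 1` into a `tanh`.
-/

open MeasureTheory ProbabilityTheory
open scoped NNReal ENNReal

/-- Density of the Gaussian distribution `N(m, s²)`. -/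
noncomputable def gpdf (m s y : ℝ) : ℝ :=
  (1 / (s * Real.sqrt (2 * Real.pi))) * Real.exp (-(y - m) ^ 2 / (2 * s ^ 2))

open Real

theorem integral_eq_of_ae_add_comp_neg_eq {G E : Type*} [MeasurableSpace G] [AddGroup G]
    [MeasurableNeg G] [NormedAddCommGroup E] [NormedSpace ℝ E] {μ : Measure G} [μ.IsNegInvariant]
    {f g : G → E} (hf : Integrable f μ) (hg : Integrable g μ)
    (h : ∀ᵐ x ∂μ, f x + f (-x) = g x + g (-x)) :
    ∫ x, f x ∂μ = ∫ x, g x ∂μ := by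
  have hsum := integral_congr_ae h
  rw [integral_add hf hf.comp_neg, integral_add hg hg.comp_neg, integral_neg_eq_self,
    integral_neg_eq_self, ← two_smul ℝ, ← two_smul ℝ] at hsum
  exact smul_right_injective E two_ne_zero hsum

noncomputable def probPosGivenAbs (p : ℝ → ℝ) (y : ℝ) : ℝ :=
  p |y| / (p |y| + p (-|y|))

section probPosGivenAbs

variable {p : ℝ → ℝ}

lemma probPosGivenAbs_abs (y : ℝ) : probPosGivenAbs p |y| = probPosGivenAbs p y := by
  rw [probPosGivenAbs, probPosGivenAbs, abs_abs]

lemma probPosGivenAbs_neg (y : ℝ) : probPosGivenAbs p (-y) = probPosGivenAbs p y := by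
  rw [probPosGivenAbs, probPosGivenAbs, abs_neg]

lemma probPosGivenAbs_sqrt_sq (y : ℝ) : probPosGivenAbs p √(y ^ 2) = probPosGivenAbs p y := by
  rw [sqrt_sq_eq_abs, probPosGivenAbs_abs]

lemma measurable_probPosGivenAbs (hp : Measurable p) : Measurable (probPosGivenAbs p) :=
  (hp.comp measurable_abs).div ((hp.comp measurable_abs).add (hp.comp measurable_abs.neg))

lemma abs_probPosGivenAbs_le_one (hp : ∀ y, 0 ≤ p y) (y : ℝ) : |probPosGivenAbs p y| ≤ 1 := by
  rw [probPosGivenAbs, abs_of_nonneg (div_nonneg (hp _) (add_nonneg (hp _) (hp _)))]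
  exact div_le_one_of_le₀ (le_add_of_nonneg_right (hp _)) (add_nonneg (hp _) (hp _))

lemma add_mul_probPosGivenAbs (hp : ∀ y, 0 ≤ p y) (y : ℝ) :
    (p y + p (-y)) * probPosGivenAbs p y = p |y| := by
  have hsum : p y + p (-y) = p |y| + p (-|y|) := by
    rcases abs_choice y with h | h <;> rw [h]
    · rw [neg_neg, add_comm]
  rw [hsum, probPosGivenAbs]
  refine mul_div_cancel_of_imp' fun h => ?_
  linarith [hp |y|, hp (-|y|)]

end probPosGivenAbs

theorem integral_ite_pos_mul_sq_eq {p g : ℝ → ℝ} (hp : ∀ y, 0 ≤ p y) (hpm : Measurable p)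
    (hg : Integrable (fun y => g (y ^ 2)) (volume.withDensity fun y => ENNReal.ofReal (p y))) :
    ∫ y, (if 0 < y then 1 else 0) * g (y ^ 2) ∂(volume.withDensity fun y => ENNReal.ofReal (p y))
      = ∫ y, probPosGivenAbs p y * g (y ^ 2)
          ∂(volume.withDensity fun y => ENNReal.ofReal (p y)) := by
  have hdm : Measurable fun y => ENNReal.ofReal (p y) := hpm.ennreal_ofReal
  have hfin : ∀ᵐ y ∂(volume : Measure ℝ), ENNReal.ofReal (p y) < ∞ :=
    ae_of_all _ fun _ => ENNReal.ofReal_lt_top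
  have hPg : Integrable (fun y => p y * g (y ^ 2)) := by
    simpa [ENNReal.toReal_ofReal (hp _)] using
      (integrable_withDensity_iff_integrable_smul' hdm hfin).1 hg
  simp only [integral_withDensity_eq_integral_toReal_smul hdm hfin, ENNReal.toReal_ofReal (hp _),
    smul_eq_mul]
  have hite : Measurable fun y : ℝ => if 0 < y then (1 : ℝ) else 0 :=
    Measurable.ite measurableSet_Ioi measurable_const measurable_const
  refine integral_eq_of_ae_add_comp_neg_eq ?_ ?_ ?_
  · refine (hPg.bdd_mul (c := 1) hite.aestronglyMeasurable (ae_of_all _ fun y => ?_)).congr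
      (ae_of_all _ fun y => by ring)
    split_ifs <;> simp
  · refine (hPg.bdd_mul (c := 1) (measurable_probPosGivenAbs hpm).aestronglyMeasurable
      (ae_of_all _ fun y => abs_probPosGivenAbs_le_one hp y)).congr (ae_of_all _ fun y => by ring)
  · filter_upwards [Measure.ae_ne volume (0 : ℝ)] with y hy
    have hr := add_mul_probPosGivenAbs hp y
    rw [probPosGivenAbs_neg, neg_sq]
    rcases hy.lt_or_gt with h | h
    · rw [abs_of_neg h] at hr
      simp only [if_neg h.not_gt, if_pos (neg_pos.2 h)]
      linear_combination -g (y ^ 2) * hr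
    · rw [abs_of_pos h] at hr
      simp only [if_pos h, if_neg (neg_neg_of_pos h).not_gt]
      linear_combination -g (y ^ 2) * hr

section Independent

variable {Ω β : Type*} {mΩ : MeasurableSpace Ω} [MeasurableSpace β] {μ : Measure Ω}
  [IsFiniteMeasure μ] {U : Ω → β} {Y : Ω → ℝ}

theorem setIntegral_preimage_pair_sq_eq_integral_map (hUm : Measurable U) (hYm : Measurable Y)
    (hindep : IndepFun U Y μ) {f : ℝ → ℝ} (hfm : Measurable f) {C : ℝ} (hfC : ∀ y, ‖f y‖ ≤ C)
    {S : Set (β × ℝ)} (hS : MeasurableSet S) :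
    ∫ ω in (fun ω => (U ω, Y ω ^ 2)) ⁻¹' S, f (Y ω) ∂μ
      = ∫ u, ∫ y, f y * S.indicator 1 (u, y ^ 2) ∂(μ.map Y) ∂(μ.map U) := by
  set H : β × ℝ → ℝ := fun z => f z.2 * S.indicator 1 (z.1, z.2 ^ 2)
  have hHm : Measurable H := (hfm.comp measurable_snd).mul ((measurable_one.indicator hS).comp
    (measurable_fst.prodMk (measurable_snd.pow_const 2)))
  have hHC : ∀ z, ‖H z‖ ≤ C := fun z => by
    by_cases hz : (z.1, z.2 ^ 2) ∈ S
    · simpa [H, hz] using hfC z.2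
    · simpa [H, hz] using (norm_nonneg _).trans (hfC 0)
  have hind : ((fun ω => (U ω, Y ω ^ 2)) ⁻¹' S).indicator (fun ω => f (Y ω))
      = fun ω => H (U ω, Y ω) := by
    funext ω
    by_cases hω : (U ω, Y ω ^ 2) ∈ S <;> simp [H, hω]
  rw [← integral_indicator (hS.preimage (hUm.prodMk (hYm.pow_const 2))), hind,
    ← integral_map (hUm.prodMk hYm).aemeasurable hHm.aestronglyMeasurable,
    (indepFun_iff_map_prod_eq_prod_map_map hUm.aemeasurable hYm.aemeasurable).1 hindep,
    integral_prod H (.of_bound hHm.aestronglyMeasurable C (ae_of_all _ hHC))]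

variable {p : ℝ → ℝ}

theorem setIntegral_ite_pos_eq_of_indepFun (hp : ∀ y, 0 ≤ p y) (hpm : Measurable p)
    (hUm : Measurable U) (hYm : Measurable Y)
    (hY : μ.map Y = volume.withDensity fun y => ENNReal.ofReal (p y)) (hindep : IndepFun U Y μ)
    {S : Set (β × ℝ)} (hS : MeasurableSet S) :
    ∫ ω in (fun ω => (U ω, Y ω ^ 2)) ⁻¹' S, (if 0 < Y ω then 1 else 0) ∂μ
      = ∫ ω in (fun ω => (U ω, Y ω ^ 2)) ⁻¹' S, probPosGivenAbs p (Y ω) ∂μ := by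
  have hite : Measurable fun y : ℝ => if 0 < y then (1 : ℝ) else 0 :=
    Measurable.ite measurableSet_Ioi measurable_const measurable_const
  rw [setIntegral_preimage_pair_sq_eq_integral_map hUm hYm hindep hite (C := 1)
      (fun y => by split_ifs <;> simp) hS,
    setIntegral_preimage_pair_sq_eq_integral_map hUm hYm hindep (measurable_probPosGivenAbs hpm)
      (abs_probPosGivenAbs_le_one hp) hS]
  congr 1 with u
  have hg : Integrable (fun y => S.indicator (1 : β × ℝ → ℝ) (u, y ^ 2)) (μ.map Y) :=
    .of_bound (((measurable_one.indicator hS).comp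
      (measurable_const.prodMk (measurable_id.pow_const 2))).aestronglyMeasurable) 1
      (ae_of_all _ fun y => by by_cases hy : (u, y ^ 2) ∈ S <;> simp [hy])
  rw [hY] at hg ⊢
  exact integral_ite_pos_mul_sq_eq (g := fun t => S.indicator 1 (u, t)) hp hpm hg

theorem condExp_ite_pos_ae_eq_of_indepFun (hp : ∀ y, 0 ≤ p y) (hpm : Measurable p)
    (hUm : Measurable U) (hYm : Measurable Y)
    (hY : μ.map Y = volume.withDensity fun y => ENNReal.ofReal (p y)) (hindep : IndepFun U Y μ)
    {m : MeasurableSpace Ω} (hm : m ≤ MeasurableSpace.comap (fun ω => (U ω, Y ω ^ 2)) inferInstance)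
    (hr : AEStronglyMeasurable[m] (fun ω => probPosGivenAbs p (Y ω)) μ) :
    μ[fun ω => if 0 < Y ω then 1 else 0 | m] =ᵐ[μ] fun ω => probPosGivenAbs p (Y ω) := by
  have hm₀ : m ≤ mΩ := hm.trans (hUm.prodMk (hYm.pow_const 2)).comap_le
  have hite : Integrable (fun ω => if 0 < Y ω then (1 : ℝ) else 0) μ :=
    .of_bound ((Measurable.ite measurableSet_Ioi measurable_const measurable_const).comp
      hYm).aestronglyMeasurable 1 (ae_of_all _ fun ω => by split_ifs <;> simp)
  have hr_int : Integrable (fun ω => probPosGivenAbs p (Y ω)) μ :=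
    .of_bound ((measurable_probPosGivenAbs hpm).comp hYm).aestronglyMeasurable 1
      (ae_of_all _ fun ω => abs_probPosGivenAbs_le_one hp (Y ω))
  refine (ae_eq_condExp_of_forall_setIntegral_eq hm₀ hite (fun s _ _ => hr_int.integrableOn)
    (fun s hs _ => ?_) hr).symm
  obtain ⟨S, hS, rfl⟩ := hm s hs
  exact (setIntegral_ite_pos_eq_of_indepFun hp hpm hUm hYm hY hindep hS).symm

end Independent

theorem Real.measurable_tan : Measurable tan := by
  convert measurable_sin.div measurable_cos using 1
  exact funext tan_eq_sin_div_cos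

theorem ae_tan_arctan_add_mul_pi {Ω : Type*} [MeasurableSpace Ω] {μ : Measure Ω} {U : Ω → ℝ}
    (hUm : Measurable U) {a b : ℝ≥0∞} (hU : μ.map U = a • Measure.dirac 0 + b • Measure.dirac 1)
    (Z : Ω → ℝ) : ∀ᵐ ω ∂μ, tan (arctan (Z ω) + U ω * π) = Z ω := by
  have hU01 : ∀ᵐ u ∂(μ.map U), ∀ t, tan (arctan t + u * π) = t := by
    rw [hU, ae_add_measure_iff]
    refine ⟨Measure.ae_smul_measure ?_ _, Measure.ae_smul_measure ?_ _⟩ <;>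
      rw [ae_dirac_eq, Filter.eventually_pure] <;> simp [tan_add_pi, tan_arctan]
  filter_upwards [ae_of_ae_map hUm.aemeasurable hU01] with ω hω
  exact hω (Z ω)

section Gaussian

variable {m σ : ℝ}

lemma gpdf_pos (hσ : 0 < σ) (y : ℝ) : 0 < gpdf m σ y := by
  unfold gpdf; positivity

lemma measurable_gpdf : Measurable (gpdf m σ) := by
  unfold gpdf; fun_prop

lemma gaussianPDFReal_eq_gpdf (hσ : 0 < σ) :
    gaussianPDFReal m ⟨σ ^ 2, sq_nonneg σ⟩ = gpdf m σ := by
  ext y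
  change (√(2 * π * σ ^ 2))⁻¹ * exp (-(y - m) ^ 2 / (2 * σ ^ 2)) = gpdf m σ y
  rw [gpdf, sqrt_mul (by positivity), sqrt_sq hσ.le, one_div, mul_comm σ]

lemma gaussianReal_eq_withDensity_gpdf (hσ : 0 < σ) :
    gaussianReal m ⟨σ ^ 2, sq_nonneg σ⟩
      = volume.withDensity fun y => ENNReal.ofReal (gpdf m σ y) := by
  have hv : (⟨σ ^ 2, sq_nonneg σ⟩ : ℝ≥0) ≠ 0 := fun h => (pow_pos hσ 2).ne' (congrArg Subtype.val h)
  rw [gaussianReal_of_var_ne_zero _ hv, ← gaussianPDFReal_eq_gpdf hσ]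
  rfl

lemma gpdf_eq_mul_exp (hσ : 0 < σ) (y : ℝ) :
    gpdf m σ y = gpdf 0 σ |y| * exp (-m ^ 2 / (2 * σ ^ 2)) * exp (m / σ ^ 2 * y) := by
  rw [gpdf, gpdf, sub_zero, sq_abs, mul_assoc, mul_assoc, ← exp_add, ← exp_add]
  congr 2
  field_simp
  ring

lemma two_mul_probPosGivenAbs_gpdf_sub_one (hσ : 0 < σ) (y : ℝ) :
    2 * probPosGivenAbs (gpdf m σ) y - 1 = tanh (m / σ ^ 2 * |y|) := by
  rw [probPosGivenAbs, gpdf_eq_mul_exp hσ |y|, gpdf_eq_mul_exp hσ (-|y|), abs_neg, abs_abs, tanh_eq]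
  have := gpdf_pos (m := 0) hσ |y|
  field_simp
  ring

end Gaussian

/-- With `Y ~ N(m, σ²)`, `U ~ Bernoulli(1/2)` independent of `Y`, and
`X = arctan(Y²) + Uπ`, we have `E(1_{Y>0} | Y²) = P_Y(|Y|)/(P_Y(|Y|)+P_Y(-|Y|))` a.s.;
equivalently `2·E(1_{Y>0}|X) - 1 = tanh((m/σ²)·√(tan X))` a.s. -/
theorem condexp_indicator_pos_eq {Ω : Type*} [MeasurableSpace Ω] (μ : Measure Ω)
    [IsProbabilityMeasure μ] (Y U : Ω → ℝ) (m σ : ℝ) (hσ : 0 < σ)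
    (hYm : Measurable Y) (hUm : Measurable U)
    (hY : μ.map Y = gaussianReal m ⟨σ ^ 2, sq_nonneg σ⟩)
    (hU : μ.map U = (1/2 : ℝ≥0∞) • Measure.dirac (0 : ℝ) + (1/2 : ℝ≥0∞) • Measure.dirac 1)
    (hindep : IndepFun U Y μ)
    (X : Ω → ℝ) (hX : X = fun ω => Real.arctan ((Y ω) ^ 2) + U ω * Real.pi) :
    (μ[(fun ω => if 0 < Y ω then (1 : ℝ) else 0) |
          MeasurableSpace.comap (fun ω => (Y ω) ^ 2) inferInstance]
        =ᵐ[μ] fun ω => gpdf m σ |Y ω| / (gpdf m σ |Y ω| + gpdf m σ (-|Y ω|))) ∧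
      ((fun ω => 2 * (μ[(fun ω' => if 0 < Y ω' then (1 : ℝ) else 0) |
            MeasurableSpace.comap X inferInstance]) ω - 1)
        =ᵐ[μ] fun ω => Real.tanh ((m / σ ^ 2) * Real.sqrt (Real.tan (X ω)))) := by
  have hp : ∀ y, 0 ≤ gpdf m σ y := fun y => (gpdf_pos hσ y).le
  have hY' := hY.trans (gaussianReal_eq_withDensity_gpdf hσ)
  have hr : Measurable (probPosGivenAbs (gpdf m σ)) := measurable_probPosGivenAbs measurable_gpdf
  have htan : ∀ᵐ ω ∂μ, tan (X ω) = Y ω ^ 2 := hX ▸ ae_tan_arctan_add_mul_pi hUm hU _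
  constructor
  · exact condExp_ite_pos_ae_eq_of_indepFun hp measurable_gpdf hUm hYm hY' hindep
      (MeasurableSpace.comap_le_comap_of_eq_comp Prod.snd measurable_snd rfl)
      ⟨_, (hr.comp (comap_measurable _).sqrt).stronglyMeasurable,
        ae_of_all _ fun ω => (probPosGivenAbs_sqrt_sq (Y ω)).symm⟩
  · have hXZ := MeasurableSpace.comap_le_comap_of_eq_comp (f := fun ω => (U ω, Y ω ^ 2))
      (fun z : ℝ × ℝ => arctan z.2 + z.1 * π) (by fun_prop) hX
    filter_upwards [condExp_ite_pos_ae_eq_of_indepFun hp measurable_gpdf hUm hYm hY' hindep hXZ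
      ⟨_, (hr.comp (measurable_tan.comp (comap_measurable X)).sqrt).stronglyMeasurable,
        htan.mono fun ω hω => by simp only [Function.comp_apply, hω, probPosGivenAbs_sqrt_sq]⟩,
      htan] with ω hcond hω
    rw [hcond, two_mul_probPosGivenAbs_gpdf_sub_one hσ, hω, sqrt_sq_eq_abs]
end

section
/- In the example Y ~ N(μ, σ²), U ~ Bernoulli(1/2) independent of Y, X = arctan(Y²) + Uπ with μ = 0 (α = 0): E(Y|X) = 0 almost surely, hence the simplified (predictive) maximal correlation sup_f ρ(f(X), Y) = 0, while Y² = tan(X), so HGR(X,Y) = 1. -/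
open MeasureTheory ProbabilityTheory
open scoped NNReal ENNReal

/-- The Hirschfeld–Gebelein–Rényi maximal correlation
`HGR(U,V) = sup_{f,g} ρ(f(U), g(V))` over measurable `f`, `g` such that `f(U)`, `g(V)`
have positive finite variance. -/
noncomputable def HGR {Ω β γ : Type*} [MeasurableSpace Ω] [MeasurableSpace β]
    [MeasurableSpace γ] (μ : Measure Ω) (U : Ω → β) (V : Ω → γ) : ℝ :=
  sSup {r : ℝ | ∃ f : β → ℝ, ∃ g : γ → ℝ, Measurable f ∧ Measurable g ∧
      MemLp (fun ω => f (U ω)) 2 μ ∧ MemLp (fun ω => g (V ω)) 2 μ ∧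
      0 < variance (fun ω => f (U ω)) μ ∧ 0 < variance (fun ω => g (V ω)) μ ∧
      r = pearson μ (fun ω => f (U ω)) (fun ω => g (V ω))}

/-!
Because `U` is independent of `Y` and `Y` is symmetric, `(U, Y)` and `(U, -Y)` have the same
law, while `X` depends on `Y` only through `Y²`; hence `E[f(X) Y] = 0` for every measurable `f`,
which gives both `E(Y|X) = 0` and `ρ(f(X), Y) = 0`. On the other hand `U ∈ {0, 1}` a.s., so
`tan X = Y²` a.s., and `Y²` has positive variance since the Gaussian law has no atoms; thus
`ρ(tan X, Y²) = 1`, the largest value Cauchy–Schwarz allows.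
-/

section Correlation

variable {Ω : Type*} [MeasurableSpace Ω] {μ : Measure Ω} {A B : Ω → ℝ}

lemma pearson_eq_zero_of_integral_mul_eq_zero (hAB : ∫ ω, A ω * B ω ∂μ = 0)
    (hB : ∫ ω, B ω ∂μ = 0) : pearson μ A B = 0 := by
  simp [pearson, cov, hAB, hB]

lemma covariance_sq_le_variance_mul [IsFiniteMeasure μ] (hA : MemLp A 2 μ) (hB : MemLp B 2 μ) :
    cov[A, B; μ] ^ 2 ≤ Var[A; μ] * Var[B; μ] := by
  -- `t ↦ Var[A - t • B]` is a nonnegative quadratic, so its discriminant is nonpositive.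
  have hquad : ∀ t : ℝ, 0 ≤ Var[B; μ] * (t * t) + (-2 * cov[A, B; μ]) * t + Var[A; μ] := by
    intro t
    have h := variance_nonneg (A - t • B) μ
    rw [variance_sub hA (hB.const_smul t), variance_smul, covariance_smul_right] at h
    linarith
  have := discrim_le_zero hquad
  rw [discrim] at this
  nlinarith

variable [IsProbabilityMeasure μ]

lemma cov_eq_covariance (hA : MemLp A 2 μ) (hB : MemLp B 2 μ) : cov μ A B = cov[A, B; μ] :=
  (covariance_eq_sub hA hB).symm

lemma pearson_le_one (hA : MemLp A 2 μ) (hB : MemLp B 2 μ) : pearson μ A B ≤ 1 := by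
  rcases (mul_nonneg (Real.sqrt_nonneg (Var[A; μ])) (Real.sqrt_nonneg (Var[B; μ]))).eq_or_lt
    with h | h
  · simp [pearson, ← h] -- `pearson` divides by zero here, so it is `0`
  rw [pearson, div_le_one h, cov_eq_covariance hA hB, ← Real.sqrt_mul (variance_nonneg A μ)]
  exact Real.le_sqrt_of_sq_le (covariance_sq_le_variance_mul hA hB)

lemma pearson_eq_one_of_ae_eq (hAB : A =ᵐ[μ] B) (hB : MemLp B 2 μ) (hvB : 0 < Var[B; μ]) :
    pearson μ A B = 1 := by
  have hcov : cov μ A B = Var[B; μ] := by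
    have hAB' : ∫ ω, A ω * B ω ∂μ = ∫ ω, B ω * B ω ∂μ :=
      integral_congr_ae (by filter_upwards [hAB] with ω h; rw [h])
    rw [cov, hAB', integral_congr_ae hAB, ← cov, cov_eq_covariance hB hB,
      covariance_self hB.aemeasurable]
  rw [pearson, hcov, variance_congr hAB, Real.mul_self_sqrt hvB.le, div_self hvB.ne']

end Correlation

section MaximalCorrelation

variable {Ω β γ : Type*} [MeasurableSpace Ω] [MeasurableSpace β] [MeasurableSpace γ]
  {μ : Measure Ω}

lemma HGR_eq_one_of_ae_eq [IsProbabilityMeasure μ] {X : Ω → β} {Y : Ω → γ}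
    {f : β → ℝ} {g : γ → ℝ} (hf : Measurable f) (hg : Measurable g)
    (hfg : (fun ω => f (X ω)) =ᵐ[μ] fun ω => g (Y ω))
    (hg2 : MemLp (fun ω => g (Y ω)) 2 μ) (hvar : 0 < Var[fun ω => g (Y ω); μ]) :
    HGR μ X Y = 1 := by
  refine IsGreatest.csSup_eq ⟨⟨f, g, hf, hg, hg2.ae_eq hfg.symm, hg2,
    variance_congr hfg ▸ hvar, hvar, (pearson_eq_one_of_ae_eq hfg hg2 hvar).symm⟩, ?_⟩
  rintro r ⟨f', g', -, -, hf'2, hg'2, -, -, rfl⟩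
  exact pearson_le_one hf'2 hg'2

noncomputable def predictiveCorrelation (μ : Measure Ω) (X : Ω → β) (Y : Ω → ℝ) : ℝ :=
  sSup {r : ℝ | ∃ f : β → ℝ, Measurable f ∧ MemLp (fun ω => f (X ω)) 2 μ ∧
    0 < variance (fun ω => f (X ω)) μ ∧ r = pearson μ (fun ω => f (X ω)) Y}

lemma predictiveCorrelation_eq_zero {X : Ω → β} {Y : Ω → ℝ}
    (horth : ∀ f : β → ℝ, Measurable f → ∫ ω, f (X ω) * Y ω ∂μ = 0) (hY : ∫ ω, Y ω ∂μ = 0)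
    (hnondeg : ∃ f : β → ℝ, Measurable f ∧ MemLp (fun ω => f (X ω)) 2 μ ∧
      0 < Var[fun ω => f (X ω); μ]) :
    predictiveCorrelation μ X Y = 0 := by
  obtain ⟨f₀, hf₀, hf₀2, hf₀var⟩ := hnondeg
  refine IsGreatest.csSup_eq ⟨⟨f₀, hf₀, hf₀2, hf₀var,
    (pearson_eq_zero_of_integral_mul_eq_zero (horth f₀ hf₀) hY).symm⟩, ?_⟩
  rintro r ⟨f, hf, -, -, rfl⟩
  exact (pearson_eq_zero_of_integral_mul_eq_zero (horth f hf) hY).le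

lemma condExp_comap_ae_eq_zero [IsFiniteMeasure μ] {X : Ω → β} {Y : Ω → ℝ} (hX : Measurable X)
    (hY : Integrable Y μ) (horth : ∀ f : β → ℝ, Measurable f → ∫ ω, f (X ω) * Y ω ∂μ = 0) :
    μ[Y | MeasurableSpace.comap X inferInstance] =ᵐ[μ] fun _ => (0 : ℝ) := by
  refine (ae_eq_condExp_of_forall_setIntegral_eq hX.comap_le hY
    (fun s _ _ => integrableOn_const) (fun s hs _ => ?_) aestronglyMeasurable_const).symm
  obtain ⟨t, ht, rfl⟩ := hs
  rw [integral_zero, ← integral_indicator (hX ht), eq_comm,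
    ← horth (t.indicator 1) (measurable_one.indicator ht)]
  congr 1
  funext ω
  by_cases hω : X ω ∈ t <;> simp [hω]

end MaximalCorrelation

section Symmetry

variable {Ω β : Type*} [MeasurableSpace Ω] [MeasurableSpace β] {μ : Measure Ω}
  {U : Ω → β} {Y : Ω → ℝ}

lemma identDistrib_prodMk_neg [IsFiniteMeasure μ] (hU : Measurable U) (hY : Measurable Y)
    (hind : IndepFun U Y μ) (hsymm : μ.map (fun ω => -Y ω) = μ.map Y) :
    IdentDistrib (fun ω => (U ω, -Y ω)) (fun ω => (U ω, Y ω)) μ μ where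
  aemeasurable_fst := (hU.prodMk hY.neg).aemeasurable
  aemeasurable_snd := (hU.prodMk hY).aemeasurable
  map_eq := by
    rw [(indepFun_iff_map_prod_eq_prod_map_map (g := fun ω => -Y ω) hU.aemeasurable
        hY.neg.aemeasurable).mp (hind.comp measurable_id measurable_neg),
      (indepFun_iff_map_prod_eq_prod_map_map hU.aemeasurable hY.aemeasurable).mp hind, hsymm]

lemma integral_mul_eq_zero_of_identDistrib_neg
    (hsymm : IdentDistrib (fun ω => (U ω, -Y ω)) (fun ω => (U ω, Y ω)) μ μ)
    {h : β → ℝ → ℝ} (hh : Measurable (Function.uncurry h)) (heven : ∀ u y, h u (-y) = h u y) :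
    ∫ ω, h (U ω) (Y ω) * Y ω ∂μ = 0 := by
  have hflip := (hsymm.comp (hh.mul measurable_snd)).integral_eq
  simp only [Function.comp_def, Pi.mul_apply, Function.uncurry_apply_pair, heven, mul_neg,
    integral_neg] at hflip
  linarith

end Symmetry

section Gaussian

variable {Ω : Type*} [MeasurableSpace Ω] {μ : Measure Ω} {Y : Ω → ℝ} {v : ℝ≥0}

lemma map_neg_eq_of_map_eq_gaussianReal (hY : Measurable Y) (hlaw : μ.map Y = gaussianReal 0 v) :
    μ.map (fun ω => -Y ω) = μ.map Y := by
  rw [show (fun ω => -Y ω) = Neg.neg ∘ Y from rfl, ← Measure.map_map measurable_neg hY, hlaw,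
    gaussianReal_map_neg, neg_zero]

lemma integral_eq_zero_of_map_eq_gaussianReal (hY : Measurable Y)
    (hlaw : μ.map Y = gaussianReal 0 v) : ∫ ω, Y ω ∂μ = 0 := by
  calc ∫ ω, Y ω ∂μ = ∫ x, x ∂(μ.map Y) :=
        (integral_map hY.aemeasurable aestronglyMeasurable_id).symm
    _ = 0 := by rw [hlaw, integral_id_gaussianReal]

lemma memLp_of_map_eq_gaussianReal (hY : Measurable Y) (hlaw : μ.map Y = gaussianReal 0 v)
    (p : ℝ≥0) : MemLp Y p μ := by
  have := memLp_id_gaussianReal (μ := 0) (v := v) p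
  rwa [← hlaw, memLp_map_measure_iff aestronglyMeasurable_id hY.aemeasurable] at this

lemma memLp_sq_of_map_eq_gaussianReal (hY : Measurable Y) (hlaw : μ.map Y = gaussianReal 0 v) :
    MemLp (fun ω => Y ω ^ 2) 2 μ := by
  have h4 : MemLp Y (4 : ℕ) μ := memLp_of_map_eq_gaussianReal hY hlaw 4
  rw [memLp_two_iff_integrable_sq (hY.pow_const 2).aestronglyMeasurable]
  refine (h4.integrable_norm_pow (p := 4) (by norm_num)).congr (.of_forall fun ω => ?_)
  simp only [Real.norm_eq_abs, ← pow_mul]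
  exact Even.pow_abs ⟨2, rfl⟩ _

lemma variance_sq_pos_of_nullSingletonClass [IsProbabilityMeasure μ] (hY : Measurable Y)
    [NullSingletonClass (μ.map Y)] (hY2 : MemLp (fun ω => Y ω ^ 2) 2 μ) :
    0 < Var[fun ω => Y ω ^ 2; μ] := by
  refine (variance_nonneg _ μ).lt_of_ne fun hvar => ?_
  set c := ∫ ω, Y ω ^ 2 ∂μ
  have hroots : ∀ᵐ ω ∂μ, Y ω ∈ ({√c, -√c} : Set ℝ) := by
    filter_upwards [ae_eq_integral_of_variance_eq_zero hY2 hvar.symm] with ω hω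
    rw [Set.mem_insert_iff, Set.mem_singleton_iff, ← abs_eq (Real.sqrt_nonneg c),
      ← Real.sqrt_sq_eq_abs]
    exact congrArg Real.sqrt hω
  have hnull : μ.map Y {√c, -√c} = 0 :=
    ((Set.finite_singleton _).insert _).measure_zero _
  rw [Measure.map_apply hY (by measurability)] at hnull
  have hfalse : ∀ᵐ ω ∂μ, False := by
    filter_upwards [hroots, measure_eq_zero_iff_ae_notMem.mp hnull] with ω h1 h2
    exact h2 h1
  simp only [Filter.eventually_false_iff_eq_bot, ae_eq_bot] at hfalse
  exact IsProbabilityMeasure.ne_zero μ hfalse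

end Gaussian

lemma ae_eq_zero_or_eq_one_of_map_eq {Ω : Type*} [MeasurableSpace Ω] {μ : Measure Ω}
    {U : Ω → ℝ} (hU : Measurable U) {a b : ℝ≥0∞}
    (hlaw : μ.map U = a • Measure.dirac 0 + b • Measure.dirac 1) :
    ∀ᵐ ω ∂μ, U ω = 0 ∨ U ω = 1 := by
  refine ae_of_ae_map (p := fun u => u = 0 ∨ u = 1) hU.aemeasurable ?_
  rw [hlaw]
  exact ae_add_measure_iff.mpr ⟨Measure.ae_smul_measure (by simp [ae_dirac_eq]) _,
    Measure.ae_smul_measure (by simp [ae_dirac_eq]) _⟩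

lemma Real.measurable_tan_s17 : Measurable Real.tan := by
  rw [show Real.tan = fun x => Real.sin x / Real.cos x from funext Real.tan_eq_sin_div_cos]
  fun_prop

lemma tan_arctan_add_mul_pi {u : ℝ} (hu : u = 0 ∨ u = 1) (t : ℝ) :
    Real.tan (Real.arctan t + u * Real.pi) = t := by
  rcases hu with rfl | rfl
  · simp [Real.tan_arctan]
  · simp [Real.tan_add_pi, Real.tan_arctan]

/-- Degenerate case `m = 0` (`α = 0`): `E(Y|X) = 0` a.s., the simplified (predictive)
maximal correlation `sup_f ρ(f(X), Y)` is `0`, while `HGR(X,Y) = 1`. -/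
theorem degenerate_example_predictive_zero_hgr_one {Ω : Type*} [MeasurableSpace Ω]
    (μ : Measure Ω) [IsProbabilityMeasure μ] (Y U : Ω → ℝ) (σ : ℝ) (hσ : 0 < σ)
    (hYm : Measurable Y) (hUm : Measurable U)
    (hY : μ.map Y = gaussianReal 0 ⟨σ ^ 2, sq_nonneg σ⟩)
    (hU : μ.map U = (1/2 : ℝ≥0∞) • Measure.dirac (0 : ℝ) + (1/2 : ℝ≥0∞) • Measure.dirac 1)
    (hindep : IndepFun U Y μ)
    (X : Ω → ℝ) (hX : X = fun ω => Real.arctan ((Y ω) ^ 2) + U ω * Real.pi) :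
    (μ[Y | MeasurableSpace.comap X inferInstance] =ᵐ[μ] fun _ => (0 : ℝ)) ∧
      sSup {r : ℝ | ∃ f : ℝ → ℝ, Measurable f ∧ MemLp (fun ω => f (X ω)) 2 μ ∧
          0 < variance (fun ω => f (X ω)) μ ∧
          r = pearson μ (fun ω => f (X ω)) Y} = 0 ∧
      HGR μ X Y = 1 := by
  subst hX
  have hXm : Measurable fun ω => Real.arctan (Y ω ^ 2) + U ω * Real.pi := by fun_prop
  have horth : ∀ f : ℝ → ℝ, Measurable f →
      ∫ ω, f (Real.arctan (Y ω ^ 2) + U ω * Real.pi) * Y ω ∂μ = 0 := fun f hf =>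
    integral_mul_eq_zero_of_identDistrib_neg
      (identDistrib_prodMk_neg hUm hYm hindep (map_neg_eq_of_map_eq_gaussianReal hYm hY))
      (h := fun u y => f (Real.arctan (y ^ 2) + u * Real.pi)) (by fun_prop) (by simp)
  have htan : (fun ω => Real.tan (Real.arctan (Y ω ^ 2) + U ω * Real.pi)) =ᵐ[μ]
      fun ω => Y ω ^ 2 := by
    filter_upwards [ae_eq_zero_or_eq_one_of_map_eq hUm hU] with ω hω
    exact tan_arctan_add_mul_pi hω _
  have hv : (⟨σ ^ 2, sq_nonneg σ⟩ : ℝ≥0) ≠ 0 := by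
    simpa [← NNReal.coe_eq_zero] using hσ.ne'
  have hY2 := memLp_sq_of_map_eq_gaussianReal hYm hY
  have : NullSingletonClass (μ.map Y) := hY ▸ nullSingletonClass_gaussianReal hv
  have hvar : 0 < Var[fun ω => Y ω ^ 2; μ] := variance_sq_pos_of_nullSingletonClass hYm hY2
  exact ⟨condExp_comap_ae_eq_zero hXm
      (memLp_one_iff_integrable.mp (memLp_of_map_eq_gaussianReal hYm hY 1)) horth,
    predictiveCorrelation_eq_zero horth (integral_eq_zero_of_map_eq_gaussianReal hYm hY)
      ⟨Real.tan, Real.measurable_tan_s17, hY2.ae_eq htan.symm, variance_congr htan ▸ hvar⟩,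
    HGR_eq_one_of_ae_eq Real.measurable_tan_s17 (measurable_id.pow_const 2) htan hY2 hvar⟩
end
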